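/- arXiv:2106.11859 — 5 statements merged into one kernel-verified Lean document; each statement's English description precedes it below -/
import Mathlib

section
/- Let λ ∈ ℂ, g(λ,z) = Σ_{p≥0} λ^p z^{2^p}, f_m(λ,z) = g(λ,z^m), and h_m(λ,z) := f_{6m+4}(λ,z) - f_{2m+1}(λ,z). Then 𝒯 h_m = λ h_m for every m ∈ ℕ, i.e. h_m is an eigenvector of 𝒯 with eigenvalue λ. -/
/-- The reduced Collatz map. -/
def collatzT (n : ℕ) : ℕ := if n % 2 = 1 then (3 * n + 1) / 2 else n / 2

/-- The operator `𝒯` on formal power series (as coefficient sequences),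
determined by `𝒯(z^n) = z^{T(n)}`. -/
def opT (a : ℕ → ℂ) : ℕ → ℂ :=
  fun m => a (2 * m) + (if m % 3 = 2 then a ((2 * m - 1) / 3) else 0)

/-- The coefficient sequence of `f_m(λ, z) = g(λ, z^m) = Σ_{p≥0} λ^p z^{m·2^p}`. -/
noncomputable def fSeries (m : ℕ) (lam : ℂ) : ℕ → ℂ :=
  fun j => ∑' p : ℕ, if j = m * 2 ^ p then lam ^ p else 0

/-- The eigenvector candidate `h_m(λ,·) = f_{6m+4}(λ,·) - f_{2m+1}(λ,·)`. -/
noncomputable def hSeries (m : ℕ) (lam : ℂ) : ℕ → ℂ :=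
  fun j => fSeries (6 * m + 4) lam j - fSeries (2 * m + 1) lam j

lemma aux_inj {m p q : ℕ} (hm : 0 < m) (h : m * 2 ^ p = m * 2 ^ q) : p = q :=
  Nat.pow_right_injective (le_refl 2) (Nat.eq_of_mul_eq_mul_left hm h)

lemma summable_f (m : ℕ) (hm : 0 < m) (lam : ℂ) (j : ℕ) :
    Summable (fun p : ℕ => if j = m * 2 ^ p then lam ^ p else 0) := by
  by_cases h : ∃ p, j = m * 2 ^ p
  · obtain ⟨p, hp⟩ := h
    apply summable_of_ne_finset_zero (s := {p})
    intro q hq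
    simp only [Finset.mem_singleton] at hq
    rw [if_neg]
    intro hj
    exact hq (aux_inj hm (hp ▸ hj).symm)
  · apply summable_of_ne_finset_zero (s := ∅)
    intro q _
    rw [if_neg fun hj => h ⟨q, hj⟩]

lemma fseries_double_even (k j : ℕ) (lam : ℂ) :
    fSeries (2 * k) lam (2 * j) = fSeries k lam j := by
  unfold fSeries
  refine tsum_congr fun p => ?_
  refine if_congr ?_ rfl rfl
  rw [mul_assoc]
  constructor <;> (intro h; omega)

lemma fseries_odd_double (m j : ℕ) (lam : ℂ) :
    fSeries (2 * m + 1) lam (2 * j) = lam * fSeries (2 * m + 1) lam j := by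
  unfold fSeries
  rw [Summable.tsum_eq_zero_add (summable_f _ (by omega) _ _)]
  have h0 : (if 2 * j = (2 * m + 1) * 2 ^ 0 then lam ^ 0 else 0) = 0 := by
    rw [if_neg]; omega
  rw [h0, zero_add, ← tsum_mul_left]
  refine tsum_congr fun q => ?_
  have hc : (2 * j = (2 * m + 1) * 2 ^ (q + 1)) ↔ (j = (2 * m + 1) * 2 ^ q) := by
    rw [pow_succ, ← mul_assoc]
    constructor <;> (intro h; omega)
  rw [if_congr hc rfl rfl, mul_ite, mul_zero, pow_succ]
  ring_nf

lemma fseries_split (k j : ℕ) (hk : 0 < k) (lam : ℂ) :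
    fSeries k lam j = (if j = k then 1 else 0) + lam * fSeries (2 * k) lam j := by
  unfold fSeries
  rw [Summable.tsum_eq_zero_add (summable_f _ hk _ _)]
  congr 1
  · simp
  · rw [← tsum_mul_left]
    refine tsum_congr fun q => ?_
    have hc : (j = k * 2 ^ (q + 1)) ↔ (j = 2 * k * 2 ^ q) := by
      rw [pow_succ]; constructor <;> (intro h; rw [h]; ring)
    rw [if_congr hc rfl rfl, mul_ite, mul_zero, pow_succ]
    ring_nf

lemma fseries_third_even (m j : ℕ) (lam : ℂ) (hj : j % 3 = 2) :
    fSeries (6 * m + 4) lam ((2 * j - 1) / 3) = 0 := by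
  unfold fSeries
  have key : ∀ p : ℕ, (if (2 * j - 1) / 3 = (6 * m + 4) * 2 ^ p then lam ^ p else 0) = 0 := by
    intro p
    rw [if_neg]
    have h2 : 2 ∣ (6 * m + 4) * 2 ^ p := Dvd.dvd.mul_right ⟨3 * m + 2, by ring⟩ _
    omega
  rw [tsum_congr key, tsum_zero]

lemma fseries_third_odd (m j : ℕ) (lam : ℂ) (hj : j % 3 = 2) :
    fSeries (2 * m + 1) lam ((2 * j - 1) / 3) = if j = 3 * m + 2 then 1 else 0 := by
  unfold fSeries
  by_cases h : j = 3 * m + 2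
  · rw [if_pos h]
    rw [tsum_eq_single 0]
    · rw [if_pos (by omega), pow_zero]
    · intro q hq
      rw [if_neg]
      intro hc
      have h2 : 2 ∣ 2 ^ q := dvd_pow_self 2 hq
      have h2' : 2 ∣ (2 * m + 1) * 2 ^ q := h2.mul_left _
      omega
  · rw [if_neg h]
    have key : ∀ p : ℕ, (if (2 * j - 1) / 3 = (2 * m + 1) * 2 ^ p then lam ^ p else 0) = 0 := by
      intro p
      rw [if_neg]
      rcases Nat.eq_zero_or_pos p with hp | hp
      · subst hp; intro hc; rw [pow_zero] at hc; omega
      · have h2 : 2 ∣ 2 ^ p := dvd_pow_self 2 (by omega)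
        have h2' : 2 ∣ (2 * m + 1) * 2 ^ p := h2.mul_left _
        omega
    rw [tsum_congr key, tsum_zero]

/-- `𝒯 h_m = λ h_m` for every `m`, i.e. `h_m` is an eigenvector of
`𝒯` with eigenvalue `λ`. -/
theorem opT_hSeries_eigenvector (m : ℕ) (lam : ℂ) :
    opT (hSeries m lam) = fun j => lam * hSeries m lam j := by
  funext j
  have hA : (6 * m + 4) = 2 * (3 * m + 2) := by ring
  unfold opT hSeries
  rw [hA, fseries_double_even, fseries_odd_double,
    fseries_split (3 * m + 2) j (by omega) lam]
  by_cases h3 : j % 3 = 2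
  · rw [if_pos h3, ← hA, fseries_third_even m j lam h3, fseries_third_odd m j lam h3, hA]
    ring
  · rw [if_neg h3]
    have : (if j = 3 * m + 2 then (1 : ℂ) else 0) = 0 := by
      rw [if_neg]; omega
    rw [this]
    ring
end

section
/- If m ∈ ℕ has a diverging Collatz trajectory (the sequence T^k(m) takes each value at most finitely often, equivalently T^k(m) → ∞), then the formal power series f_m(1,z) + Σ_{k≥1} z^{T^k(m)}, where f_m(1,z) = Σ_{p≥0} z^{2^p m}, is a fixed point of 𝒯 (as a formal power series, each coefficient being well-defined). -/
/-- The coefficient sequence of `f_m(1, z) = Σ_{p≥0} z^{m·2^p}`. -/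
noncomputable def fSeriesOne (m : ℕ) : ℕ → ℂ :=
  fun j => ∑' p : ℕ, if j = m * 2 ^ p then (1 : ℂ) else 0

/-!
Let `s` be a sequence of exponents tending to infinity. Since `T⁻¹(j)` consists of `2j`
together with `(2j-1)/3` when `j ≡ 2 (mod 3)`, the operator `𝒯` sends `Σ_k z^{s k}` to
`Σ_k z^{T (s k)}`. Because `T(2^(p+1) m) = 2^p m`, this gives `𝒯 f_m(1,z) = z^{T m} + f_m(1,z)`,
while `𝒯` shifts the orbit sum `Σ_{k≥1} z^{T^k m}` to `Σ_{k≥2} z^{T^k m}`; the two terms `z^{T m}`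
cancel in the sum.
-/

open Filter

lemma collatzT_eq_iff (n j : ℕ) :
    collatzT n = j ↔ n = 2 * j ∨ (j % 3 = 2 ∧ n = (2 * j - 1) / 3) := by
  unfold collatzT; split <;> omega

lemma collatzT_two_mul (n : ℕ) : collatzT (2 * n) = n := by
  rw [collatzT_eq_iff]; omega

lemma opT_add (a b : ℕ → ℂ) : opT (a + b) = opT a + opT b := by
  funext j
  simp only [opT, Pi.add_apply]
  split_ifs <;> ring

/-- The coefficient sequence of `Σ_k z^{s k}`. -/
noncomputable def monomialSum (s : ℕ → ℕ) : ℕ → ℂ :=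
  fun j => ∑' k, if j = s k then 1 else 0

lemma summable_ite_eq_of_tendsto {s : ℕ → ℕ} (hs : Tendsto s atTop atTop) (j : ℕ) :
    Summable fun k => if j = s k then (1 : ℂ) else 0 := by
  obtain ⟨N, hN⟩ := eventually_atTop.mp (hs.eventually (eventually_gt_atTop j))
  refine summable_of_ne_finset_zero (s := Finset.range N) fun k hk => if_neg ?_
  have := hN k (by simpa using hk)
  omega

lemma ite_eq_collatzT (j n : ℕ) :
    (if j = collatzT n then (1 : ℂ) else 0) =
      (if 2 * j = n then 1 else 0) + if j % 3 = 2 ∧ (2 * j - 1) / 3 = n then 1 else 0 := by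
  have h : j = collatzT n ↔ 2 * j = n ∨ (j % 3 = 2 ∧ (2 * j - 1) / 3 = n) := by
    rw [eq_comm, collatzT_eq_iff]; omega
  rw [if_congr h rfl rfl]
  split_ifs <;> first | omega | norm_num

lemma opT_monomialSum {s : ℕ → ℕ} (hs : Tendsto s atTop atTop) :
    opT (monomialSum s) = monomialSum (collatzT ∘ s) := by
  funext j
  simp only [opT, monomialSum, Function.comp_apply, ite_eq_collatzT j]
  rw [Summable.tsum_add (summable_ite_eq_of_tendsto hs _)]
  · by_cases hj : j % 3 = 2 <;> simp [hj]
  · by_cases hj : j % 3 = 2 <;> simp [hj, summable_ite_eq_of_tendsto hs]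

lemma monomialSum_eq_single_add {s : ℕ → ℕ} (hs : Tendsto (fun k => s (k + 1)) atTop atTop) :
    monomialSum s = Pi.single (s 0) 1 + monomialSum fun k => s (k + 1) := by
  funext j
  simp only [monomialSum, Pi.add_apply, Pi.single_apply]
  exact tsum_eq_zero_add' (summable_ite_eq_of_tendsto hs j)

lemma opT_fSeriesOne {m : ℕ} (hm : 1 ≤ m) :
    opT (fSeriesOne m) = Pi.single (collatzT m) 1 + fSeriesOne m := by
  have hpow : Tendsto (fun p => m * 2 ^ p) atTop atTop :=
    StrictMono.tendsto_atTop fun p q hpq => Nat.mul_lt_mul_of_pos_left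
      (Nat.pow_lt_pow_right (by norm_num) hpq) hm
  have hshift : (fun p => collatzT (m * 2 ^ (p + 1))) = fun p => m * 2 ^ p := by
    funext p
    rw [pow_succ', mul_left_comm, collatzT_two_mul]
  change opT (monomialSum _) = _ + monomialSum _
  rw [opT_monomialSum hpow, monomialSum_eq_single_add (by simpa [hshift] using hpow)]
  simp [hshift]

lemma single_add_opT_monomialSum_orbit {m : ℕ} (hdiv : Tendsto (fun k => collatzT^[k] m) atTop atTop) :
    Pi.single (collatzT m) 1 + opT (monomialSum fun k => collatzT^[k + 1] m) =
      monomialSum fun k => collatzT^[k + 1] m := by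
  rw [opT_monomialSum ((tendsto_add_atTop_iff_nat 1).2 hdiv),
    monomialSum_eq_single_add (s := fun k => collatzT^[k + 1] m)
      ((tendsto_add_atTop_iff_nat 2).2 hdiv)]
  simp only [Function.comp_def, ← Function.iterate_succ_apply' collatzT, zero_add,
    Function.iterate_one]

/-- if the Collatz trajectory of `m` diverges (`T^k(m) → ∞`), then
`f_m(1,z) + Σ_{k≥1} z^{T^k(m)}` is a fixed point of `𝒯`. -/
theorem diverging_trajectory_fixed_point (m : ℕ) (hm : 1 ≤ m)
    (hdiv : Filter.Tendsto (fun k => collatzT^[k] m) Filter.atTop Filter.atTop) :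
    opT (fun j => fSeriesOne m j +
        ∑' k : ℕ, if j = collatzT^[k + 1] m then (1 : ℂ) else 0) =
      (fun j => fSeriesOne m j +
        ∑' k : ℕ, if j = collatzT^[k + 1] m then (1 : ℂ) else 0) := by
  change opT (fSeriesOne m + monomialSum _) = fSeriesOne m + monomialSum _
  rw [opT_add, opT_fSeriesOne hm]
  conv_rhs => rw [← single_add_opT_monomialSum_orbit hdiv]
  abel
end

section
/- If h ∈ ℓ²(ℕ) satisfies ℱh = h, where (ℱh)_m = h_{m/2} for m even and (ℱh)_m = h_{(3m+1)/2} for m odd, then h is supported at index 0 only, i.e. h corresponds to a constant function. Hence dim Ker(Id − ℱ) = 1 on H²(D). -/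
/-- The operator `ℱ` on coefficient sequences: `(ℱh)_m = h_{m/2}` for even `m`,
`(ℱh)_m = h_{(3m+1)/2}` for odd `m`. -/
def opF (a : ℕ → ℂ) : ℕ → ℂ :=
  fun m => if m % 2 = 0 then a (m / 2) else a ((3 * m + 1) / 2)

open Filter Topology

theorem opF_two_mul (a : ℕ → ℂ) (m : ℕ) : opF a (2 * m) = a m := by
  simp [opF]

theorem apply_pow_mul_eq_of_apply_mul_eq {α : Type*} {f : ℕ → α} {d : ℕ}
    (hf : ∀ m, f (d * m) = f m) (n k : ℕ) : f (d ^ k * n) = f n := by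
  induction k with
  | zero => simp
  | succ k ih => rw [pow_succ', mul_assoc, hf, ih]

/-- `f` is constant along the orbit `d ^ k * n`, which escapes to infinity when `n ≠ 0`. -/
theorem eq_of_tendsto_of_apply_mul_eq {X : Type*} [TopologicalSpace X] [T2Space X]
    {f : ℕ → X} {x : X} {d : ℕ} (hd : 1 < d) (hlim : Tendsto f atTop (𝓝 x))
    (hf : ∀ m, f (d * m) = f m) {n : ℕ} (hn : n ≠ 0) : f n = x := by
  have horbit : Tendsto (fun k => d ^ k * n) atTop atTop :=
    tendsto_atTop_mono (fun k => Nat.le_mul_of_pos_right _ (Nat.pos_of_ne_zero hn))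
      (tendsto_pow_atTop_atTop_of_one_lt hd)
  have hconst : Tendsto (fun _ : ℕ => f n) atTop (𝓝 x) := by
    simpa only [Function.comp_def, apply_pow_mul_eq_of_apply_mul_eq hf] using hlim.comp horbit
  exact tendsto_nhds_unique tendsto_const_nhds hconst

/-- an `ℓ²` fixed point of `ℱ` is supported at index `0` only,
i.e. corresponds to a constant function; hence `dim Ker(Id − ℱ) = 1` on `H²(D)`. -/
theorem opF_fixed_point_constant (h : ℕ → ℂ)
    (hl2 : Summable (fun n => ‖h n‖ ^ 2)) (hfix : opF h = h) :
    ∀ n : ℕ, 1 ≤ n → h n = 0 := by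
  intro n hn
  have hdouble : ∀ m, ‖h (2 * m)‖ ^ 2 = ‖h m‖ ^ 2 := fun m => by
    rw [← congrFun hfix (2 * m), opF_two_mul]
  have hsq : ‖h n‖ ^ 2 = 0 :=
    eq_of_tendsto_of_apply_mul_eq one_lt_two hl2.tendsto_atTop_zero hdouble
      (Nat.one_le_iff_ne_zero.mp hn)
  simpa using hsq
end

section
/- For a formal power series h = Σ a_n z^n, the equation ℱh = h (with ℱ(Σa_n z^n) = Σ a_n z^{2n} + Σ_k a_{3k+2} z^{2k+1}) holds if and only if a_n = a_{T(n)} for all n ∈ ℕ. Consequently, if the Collatz conjecture holds, then every such h satisfies a_n = a_1 for all n ≥ 1, i.e. h = a_0 + a_1 · z/(1−z). -/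
lemma opF_eq (a : ℕ → ℂ) (m : ℕ) : opF a m = a (collatzT m) := by
  unfold opF collatzT
  rcases Nat.mod_two_eq_zero_or_one m with h | h <;> simp [h]

/-- `ℱh = h` iff `a_n = a_{T(n)}` for all `n`; and if the Collatz
conjecture holds, then every fixed point `h` satisfies `a_n = a_1` for `n ≥ 1`,
i.e. `h = a_0 + a_1 · z/(1−z)`. -/
theorem opF_fixed_iff_T_invariant (a : ℕ → ℂ) :
    (opF a = a ↔ ∀ n : ℕ, a n = a (collatzT n)) ∧
      ((∀ n : ℕ, 1 ≤ n → ∃ k : ℕ, collatzT^[k] n = 1) → opF a = a →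
        ∀ n : ℕ, 1 ≤ n → a n = a 1) := by
  have key : opF a = a ↔ ∀ n : ℕ, a n = a (collatzT n) := by
    constructor
    · intro h n
      rw [← congrFun h n, opF_eq]
    · intro h
      funext n
      rw [opF_eq, ← h]
  refine ⟨key, fun hc hfix n hn => ?_⟩
  have hinv := key.mp hfix
  obtain ⟨k, hk⟩ := hc n hn
  have : ∀ k, a n = a (collatzT^[k] n) := by
    intro k
    induction k with
    | zero => simp
    | succ k ih => rw [Function.iterate_succ_apply', ← hinv, ← ih]
  rw [this k, hk]
end

section
/- Define Pol_k = Σ_{n∈ℕ, σ_∞(n)=k} z^n for k ≥ 0 (a polynomial, since only finitely many n satisfy σ_∞(n)=k). Then the operator ℱ (acting coefficientwise by (ℱa)_n = a_{T(n)}) satisfies: ℱ(Pol_0) = Pol_1, ℱ(Pol_1) = Pol_0 + Pol_2, and ℱ(Pol_k) = Pol_{k+1} for k ≥ 2. -/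
open Classical
noncomputable section

/-- The total stopping time `σ_∞(n) ∈ ℕ ∪ {∞}`: minimal `k` with `T^k(n) = 1`,
`∞` if none, with the convention `σ_∞(0) = 0`. -/
noncomputable def sigmaInf (n : ℕ) : ℕ∞ :=
  if n = 0 then 0
  else if h : ∃ k : ℕ, collatzT^[k] n = 1 then (Nat.find h : ℕ∞) else ⊤

/-- The coefficient sequence of `Pol_k = Σ_{n ≥ 1, σ_∞(n) = k} z^n`. -/
noncomputable def Pol (k : ℕ) : ℕ → ℂ :=
  fun n => if 1 ≤ n ∧ sigmaInf n = (k : ℕ∞) then 1 else 0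

/-- The operator `ℱ` acting coefficientwise: `(ℱa)_n = a_{T(n)}`. -/
def opFc (a : ℕ → ℂ) : ℕ → ℂ := fun n => a (collatzT n)

/-! For `n ≥ 2` the orbit of `n` cannot hit `1` at time `0`, so `σ_∞(n) = σ_∞(T n) + 1` (also
when both are `∞`); hence `ℱ` shifts `Pol_k` to `Pol_{k+1}` at every coefficient except `n = 1`,
where `T 1 = 2` and `σ_∞(2) = 1` produce the extra `Pol_0` in `ℱ(Pol_1)`. -/

lemma collatzT_pos {n : ℕ} (hn : 0 < n) : 0 < collatzT n := by
  unfold collatzT; split <;> omega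

lemma sigmaInf_one : sigmaInf 1 = 0 := by
  have h : ∃ k, collatzT^[k] 1 = 1 := ⟨0, rfl⟩
  simp only [sigmaInf, one_ne_zero, if_false, dif_pos h, Nat.cast_eq_zero, Nat.find_eq_zero]
  rfl

lemma sigmaInf_eq_add_one {n : ℕ} (hn : 2 ≤ n) : sigmaInf n = sigmaInf (collatzT n) + 1 := by
  have hT : collatzT n ≠ 0 := (collatzT_pos (by omega)).ne'
  by_cases h : ∃ k, collatzT^[k] (collatzT n) = 1
  · have h' : ∃ k, collatzT^[k] n = 1 := let ⟨k, hk⟩ := h; ⟨k + 1, hk⟩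
    have hfind : Nat.find h' = Nat.find h + 1 :=
      Nat.find_comp_succ h' h (by simp only [Function.iterate_zero, id_eq]; omega)
    simp only [sigmaInf, if_neg (by omega : n ≠ 0), if_neg hT, dif_pos h, dif_pos h', hfind,
      Nat.cast_succ]
  · have h' : ¬∃ k, collatzT^[k] n = 1 := by
      rintro ⟨_ | k, hk⟩
      · simp only [Function.iterate_zero, id_eq] at hk; omega
      · exact h ⟨k, hk⟩
    simp only [sigmaInf, if_neg (by omega : n ≠ 0), if_neg hT, dif_neg h, dif_neg h', top_add]

lemma sigmaInf_two : sigmaInf 2 = 1 := by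
  rw [sigmaInf_eq_add_one le_rfl, show collatzT 2 = 1 from rfl, sigmaInf_one, zero_add]

lemma sigmaInf_collatzT_eq_iff {n : ℕ} (hn : 2 ≤ n) (k : ℕ) :
    sigmaInf (collatzT n) = k ↔ sigmaInf n = (k + 1 : ℕ) := by
  rw [sigmaInf_eq_add_one hn, Nat.cast_succ]
  exact (ENat.add_left_injective_of_ne_top ENat.one_ne_top).eq_iff.symm

lemma Pol_apply_one (k : ℕ) : Pol k 1 = if k = 0 then 1 else 0 := by
  simp [Pol, sigmaInf_one, eq_comm]

lemma Pol_apply_two (k : ℕ) : Pol k 2 = if k = 1 then 1 else 0 := by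
  simp [Pol, sigmaInf_two, eq_comm]

lemma Pol_zero_apply_of_ne_one {n : ℕ} (hn : n ≠ 1) : Pol 0 n = 0 := by
  rcases Nat.lt_or_ge n 2 with hn2 | hn2
  · simp [Pol, show n = 0 by omega]
  · simp [Pol, sigmaInf_eq_add_one hn2]

lemma opFc_apply_one (a : ℕ → ℂ) : opFc a 1 = a 2 := rfl

lemma opFc_Pol_apply_of_ne_one (k : ℕ) {n : ℕ} (hn : n ≠ 1) : opFc (Pol k) n = Pol (k + 1) n := by
  rcases Nat.lt_or_ge n 2 with hn2 | hn2
  · obtain rfl : n = 0 := by omega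
    simp [opFc, Pol, collatzT]
  · have hT : 1 ≤ collatzT n := collatzT_pos (by omega)
    simp only [opFc, Pol, hT, show 1 ≤ n by omega, true_and, sigmaInf_collatzT_eq_iff hn2]

/-- `ℱ(Pol_0) = Pol_1`, `ℱ(Pol_1) = Pol_0 + Pol_2`, and
`ℱ(Pol_k) = Pol_{k+1}` for `k ≥ 2`. -/
theorem opF_on_Pol :
    opFc (Pol 0) = Pol 1 ∧
      opFc (Pol 1) = (fun n => Pol 0 n + Pol 2 n) ∧
      ∀ k : ℕ, 2 ≤ k → opFc (Pol k) = Pol (k + 1) := by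
  refine ⟨funext fun n => ?_, funext fun n => ?_, fun k hk => funext fun n => ?_⟩ <;>
    rcases eq_or_ne n 1 with rfl | hn
  · simp [opFc_apply_one, Pol_apply_one, Pol_apply_two]
  · exact opFc_Pol_apply_of_ne_one 0 hn
  · simp [opFc_apply_one, Pol_apply_one, Pol_apply_two]
  · rw [opFc_Pol_apply_of_ne_one 1 hn, Pol_zero_apply_of_ne_one hn, zero_add]
  · simp [opFc_apply_one, Pol_apply_one, Pol_apply_two]; omega
  · exact opFc_Pol_apply_of_ne_one k hn
end
end
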